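/- Let i, k, r, s be positive integers and let n ≥ max{i,k}-1 be an integer. Let l be the remainder of the division of n+1 by k. Then F^i_{r,s}(k,n) = t(i,k,n) + ∑_{j=0}^{⌊(n+1-i)/k⌋} r·s^j·F^i_{r,s}(k, n-i-jk), where t(i,k,n) = s^{⌊(n+1)/k⌋} if i ≥ k or (k > i and l ≤ i-1), and t(i,k,n) = 0 if k > i and l > i-1. -/
import Mathlib


/-- Auxiliary sequence: `genFibAux i k r s m` equals `F^i_{r,s}(k, m-1)`, i.e. the
four-parameters sequence indexed by `m = n + 1 ≥ 0`.  For `i ≤ k` the initial values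
(`-1 ≤ n ≤ k-2`, i.e. `m < k`) are `r^⌊(n+1)/i⌋`, for `k < i` (`m < i`) they are
`s^⌊(n+1)/k⌋`, and for `n ≥ max{k,i} - 1` the recurrence
`F(n) = r·F(n-i) + s·F(n-k)` holds. -/
def genFibAux (i k r s : ℕ) : ℕ → ℤ
  | m =>
    if m < max (max k i) 1 then
      if i ≤ k then (r : ℤ) ^ (m / i) else (s : ℤ) ^ (m / k)
    else
      r * genFibAux i k r s (m - max i 1) + s * genFibAux i k r s (m - max k 1)
  termination_by m => m
  decreasing_by all_goals omega

/-- The four-parameters sequence `F^i_{r,s}(k,n)` for integer `n ≥ -1`, with the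
convention that it vanishes for `n ≤ -2`. -/
def genFib (i k r s : ℕ) (n : ℤ) : ℤ :=
  if n < -1 then 0 else genFibAux i k r s (n + 1).toNat

lemma genFibAux_rec (i k r s : ℕ) (hi : 0 < i) (hk : 0 < k) {m : ℕ} (hm : max i k ≤ m) :
    genFibAux i k r s m = r * genFibAux i k r s (m - i) + s * genFibAux i k r s (m - k) := by
  rw [genFibAux]
  have h1 : max i 1 = i := by omega
  have h2 : max k 1 = k := by omega
  rw [if_neg (by omega), h1, h2]

lemma genFibAux_init (i k r s : ℕ) (hi : 0 < i) (hk : 0 < k) {m : ℕ} (hm : m < max i k) :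
    genFibAux i k r s m = if i ≤ k then (r : ℤ) ^ (m / i) else (s : ℤ) ^ (m / k) := by
  rw [genFibAux, if_pos (by omega)]

lemma genFib_rec (i k r s : ℕ) (hi : 0 < i) (hk : 0 < k) {n : ℤ}
    (hn : ((max i k : ℕ) : ℤ) - 1 ≤ n) :
    genFib i k r s n = r * genFib i k r s (n - i) + s * genFib i k r s (n - k) := by
  unfold genFib
  rw [if_neg (by omega), if_neg (by omega), if_neg (by omega)]
  rw [show (n - (i:ℤ) + 1).toNat = (n+1).toNat - i by omega,
    show (n - (k:ℤ) + 1).toNat = (n+1).toNat - k by omega]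
  exact genFibAux_rec i k r s hi hk (by omega)

lemma genFib_init (i k r s : ℕ) (hi : 0 < i) (hk : 0 < k) {n : ℤ}
    (h1 : -1 ≤ n) (h2 : n + 1 < ((max i k : ℕ) : ℤ)) :
    genFib i k r s n =
      if i ≤ k then (r : ℤ) ^ ((n + 1).toNat / i) else (s : ℤ) ^ ((n + 1).toNat / k) := by
  unfold genFib
  rw [if_neg (by omega)]
  exact genFibAux_init i k r s hi hk (by omega)


lemma sub_emod_right' (a b : ℤ) : (a - b) % b = a % b := by
  rw [Int.sub_emod, Int.emod_self, sub_zero, Int.emod_emod_of_dvd _ dvd_rfl]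

lemma genFib_key (i k r s : ℕ) (hi : 0 < i) (hk : 0 < k) (hr : 0 < r) (hs : 0 < s) :
    ∀ m : ℕ, ∀ n : ℤ, n = (m : ℤ) + ((max i k : ℕ) : ℤ) - 1 →
    genFib i k r s n =
      (if k ≤ i ∨ (i < k ∧ (n + 1) % (k : ℤ) ≤ (i : ℤ) - 1) then
          (s : ℤ) ^ ((n + 1).toNat / k)
        else 0) +
        ∑ j ∈ Finset.range ((n + 1 - i).toNat / k + 1),
          (r : ℤ) * (s : ℤ) ^ j * genFib i k r s (n - i - (j : ℤ) * k) := by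
  intro m
  induction m using Nat.strong_induction_on with
  | _ m IH =>
    intro n hmn
    have hik : (i : ℤ) ≤ (max i k : ℕ) := by omega
    have hki : (k : ℤ) ≤ (max i k : ℕ) := by omega
    have hn : ((max i k : ℕ) : ℤ) - 1 ≤ n := by omega
    rw [genFib_rec i k r s hi hk hn]
    by_cases hstep : k ≤ m
    · -- inductive step
      have hnk : n - k = ((m - k : ℕ) : ℤ) + ((max i k : ℕ) : ℤ) - 1 := by
        push_cast [hstep]; omega
      rw [IH (m - k) (by omega) (n - k) hnk]
      have hJ : (n + 1 - i).toNat / k = (n - k + 1 - i).toNat / k + 1 := by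
        rw [show (n + 1 - (i:ℤ)).toNat = (n - k + 1 - i).toNat + k by omega,
          Nat.add_div_right _ hk]
      have he : (n + 1).toNat / k = (n - k + 1).toNat / k + 1 := by
        rw [show (n + 1 : ℤ).toNat = (n - k + 1).toNat + k by omega,
          Nat.add_div_right _ hk]
      have hmod : (n - k + 1) % (k : ℤ) = (n + 1) % k := by
        rw [show n - (k:ℤ) + 1 = n + 1 - k by ring, sub_emod_right']
      rw [hJ, he, hmod]
      conv_rhs => rw [Finset.sum_range_succ']
      rw [mul_add, Finset.mul_sum]
      push_cast
      have hsum : ∀ j ∈ Finset.range ((n - k + 1 - i).toNat / k + 1),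
          (s:ℤ) * ((r:ℤ) * (s:ℤ) ^ j * genFib i k r s (n - k - i - (j:ℤ) * k))
          = (r:ℤ) * ((s:ℤ) ^ j * s) * genFib i k r s (n - i - ((j:ℤ) + 1) * k) := by
        intro j _
        rw [show n - (k:ℤ) - i - (j:ℤ) * k = n - i - ((j:ℤ) + 1) * k by ring]
        ring
      rw [Finset.sum_congr rfl hsum]
      simp only [pow_succ]
      rw [show n - (i:ℤ) - 0 * k = n - i by ring]
      by_cases hcond : k ≤ i ∨ (i < k ∧ (n + 1) % (k : ℤ) ≤ (i : ℤ) - 1)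
      · rw [if_pos hcond, if_pos hcond]
        ring
      · rw [if_neg hcond, if_neg hcond]
        ring
    · -- base case: max i k - 1 ≤ n ≤ max i k + k - 2
      have hnub : n ≤ ((max i k : ℕ) : ℤ) + k - 2 := by omega
      by_cases hik' : i ≤ k
      · -- max = k, n ∈ [k-1, 2k-2]
        have hmax : ((max i k : ℕ) : ℤ) = k := by omega
        have hmod : (n + 1) % (k : ℤ) = n + 1 - k := by
          rw [← sub_emod_right' (n + 1) k, Int.emod_eq_of_lt (by omega) (by omega)]
        rw [hmod]
        rw [genFib_init i k r s hi hk (show (-1:ℤ) ≤ n - k by omega)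
          (show n - (k:ℤ) + 1 < ((max i k : ℕ) : ℤ) by omega), if_pos hik']
        by_cases hb : n + 1 - (i : ℤ) < k
        · -- J = 0
          have hJ : (n + 1 - (i:ℤ)).toNat / k = 0 := Nat.div_eq_of_lt (by omega)
          have he : (n + 1).toNat / k = 1 := by
            rw [Nat.div_eq_sub_div hk (by omega), Nat.div_eq_of_lt (by omega)]
          have he' : (n - (k:ℤ) + 1).toNat / i = 0 := Nat.div_eq_of_lt (by omega)
          rw [hJ, he, he', if_pos (show k ≤ i ∨ (i < k ∧ n + 1 - (k:ℤ) ≤ (i:ℤ) - 1) by omega)]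
          rw [Finset.sum_range_one, show n - (i:ℤ) - (0:ℕ) * k = n - i by push_cast; ring]
          ring
        · -- J = 1, i < k
          have hilt : i < k := by omega
          have hJ : (n + 1 - (i:ℤ)).toNat / k = 1 := by
            rw [Nat.div_eq_sub_div hk (by omega), Nat.div_eq_of_lt (by omega)]
          rw [hJ, if_neg (show ¬(k ≤ i ∨ (i < k ∧ n + 1 - (k:ℤ) ≤ (i:ℤ) - 1)) by omega)]
          rw [Finset.sum_range_succ, Finset.sum_range_one,
            show n - (i:ℤ) - (0:ℕ) * k = n - i by push_cast; ring,
            show n - (i:ℤ) - (1:ℕ) * k = n - i - k by push_cast; ring]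
          rw [genFib_init i k r s hi hk (show (-1:ℤ) ≤ n - i - k by omega)
            (show n - (i:ℤ) - k + 1 < ((max i k : ℕ) : ℤ) by omega), if_pos hik']
          have hee : (n - (k:ℤ) + 1).toNat / i = (n - (i:ℤ) - k + 1).toNat / i + 1 := by
            rw [show (n - (k:ℤ) + 1).toNat = (n - (i:ℤ) - k + 1).toNat + i by omega,
              Nat.add_div_right _ hi]
          rw [hee, pow_succ]
          ring
      · -- max = i, k < i, n ∈ [i-1, i+k-2]
        have hmax : ((max i k : ℕ) : ℤ) = i := by omega
        have hJ : (n + 1 - (i:ℤ)).toNat / k = 0 := Nat.div_eq_of_lt (by omega)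
        have he : (n + 1).toNat / k = (n - (k:ℤ) + 1).toNat / k + 1 := by
          rw [show (n + 1 : ℤ).toNat = (n - (k:ℤ) + 1).toNat + k by omega,
            Nat.add_div_right _ hk]
        rw [genFib_init i k r s hi hk (show (-1:ℤ) ≤ n - k by omega)
          (show n - (k:ℤ) + 1 < ((max i k : ℕ) : ℤ) by omega), if_neg hik']
        rw [hJ, he, if_pos (Or.inl (by omega)), Finset.sum_range_one,
          show n - (i:ℤ) - (0:ℕ) * k = n - i by push_cast; ring, pow_succ]
        ring

/-- For positive integers `i, k, r, s` and integer `n ≥ max{i,k}-1`,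
with `l` the remainder of the division of `n+1` by `k`,
`F^i_{r,s}(k,n) = t(i,k,n) + ∑_{j=0}^{⌊(n+1-i)/k⌋} r·s^j·F^i_{r,s}(k, n-i-jk)`, where
`t(i,k,n) = s^⌊(n+1)/k⌋` if `i ≥ k` or (`k > i` and `l ≤ i-1`), and `t(i,k,n) = 0`
if `k > i` and `l > i-1`. -/
theorem genFib_last_i_rectangle (i k r s : ℕ) (hi : 0 < i) (hk : 0 < k)
    (hr : 0 < r) (hs : 0 < s) (n : ℤ) (hn : ((max i k : ℕ) : ℤ) - 1 ≤ n) :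
    genFib i k r s n =
      (if k ≤ i ∨ (i < k ∧ (n + 1) % (k : ℤ) ≤ (i : ℤ) - 1) then
          (s : ℤ) ^ ((n + 1).toNat / k)
        else 0) +
        ∑ j ∈ Finset.range ((n + 1 - i).toNat / k + 1),
          (r : ℤ) * (s : ℤ) ^ j * genFib i k r s (n - i - (j : ℤ) * k) := by
  exact genFib_key i k r s hi hk hr hs (n + 1 - (max i k : ℕ)).toNat n (by omega)
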